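/- arXiv:1512.01797 — 7 statements merged into one kernel-verified Lean document; each statement's English description precedes it below -/
import Mathlib

section
/- Assume ⟨·,·⟩_V and ⟨·,·⟩_{V'} are nondegenerate and that every D-linear map V → V' admits an adjoint. Let w ∈ Hom_D(V,V') with adjoint w^⋆. If X ∈ End_D(V) is skew-adjoint (⟨X v₁, v₂⟩_V = −⟨v₁, X v₂⟩_V for all v₁, v₂ ∈ V), then ⟨X·w, w⟩_W = 2·B(X, M(w)), where X·w := −w∘X. If X' ∈ End_D(V') is skew-adjoint for ⟨·,·⟩_{V'}, then ⟨X'·w, w⟩_W = 2·B(X', −M'(w)), where X'·w := X'∘w. -/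
/-!
The adjoint of `X·w` is computed from skew-adjointness: it is `X ∘ w^⋆` for `X·w = -w ∘ X`
and `-(w^⋆ ∘ X')` for `X'·w = X' ∘ w`, by nondegeneracy of `⟨·,·⟩_V`. Both identities then reduce
to cyclicity of the trace, `tr(w^⋆ X' w) = tr(X' w w^⋆)`.
-/

/-- An `ε`-Hermitian form on a `D`-vector space `V`, sesquilinear with respect to the
`F`-algebra involution `τ` of `D`, and `ε`-symmetric. -/
def IsHermForm {F D : Type*} [Field F] [Field D] [Algebra F D]
    (τ : D →ₐ[F] D) (ε : D)
    {V : Type*} [AddCommGroup V] [Module D V] (inn : V → V → D) : Prop :=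
  (∀ v₁ v₂ u, inn (v₁ + v₂) u = inn v₁ u + inn v₂ u) ∧
  (∀ v u₁ u₂, inn v (u₁ + u₂) = inn v u₁ + inn v u₂) ∧
  (∀ (a : D) (v u : V), inn (a • v) u = τ a * inn v u) ∧
  (∀ (a : D) (v u : V), inn v (a • u) = inn v u * a) ∧
  (∀ v u, inn u v = ε * τ (inn v u))

namespace IsHermForm

variable {F D : Type*} [Field F] [Field D] [Algebra F D] {τ : D →ₐ[F] D} {ε : D}
  {V : Type*} [AddCommGroup V] [Module D V] {inn : V → V → D}

theorem inner_neg_left (h : IsHermForm τ ε inn) (v u : V) : inn (-v) u = -inn v u :=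
  (AddMonoidHom.mk' (inn · u) fun v₁ v₂ => h.1 v₁ v₂ u).map_neg v

theorem inner_neg_right (h : IsHermForm τ ε inn) (v u : V) : inn v (-u) = -inn v u :=
  (AddMonoidHom.mk' (inn v) (h.2.1 v)).map_neg u

theorem inner_sub_right (h : IsHermForm τ ε inn) (v u₁ u₂ : V) :
    inn v (u₁ - u₂) = inn v u₁ - inn v u₂ :=
  (AddMonoidHom.mk' (inn v) (h.2.1 v)).map_sub u₁ u₂

theorem eq_of_inner_right_eq (h : IsHermForm τ ε inn)
    (hnd : ∀ v : V, (∀ u : V, inn v u = 0) → v = 0) {x y : V}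
    (hxy : ∀ v, inn v x = inn v y) : x = y := by
  refine sub_eq_zero.mp (hnd _ fun u => ?_)
  rw [h.2.2.2.2 u, h.inner_sub_right, hxy, sub_self, map_zero, mul_zero]

end IsHermForm

section Adjoint

variable {F D : Type*} [Field F] [Field D] [Algebra F D] {τ : D →ₐ[F] D} {ε ε' : D}
  {V V' : Type*} [AddCommGroup V] [Module D V] [AddCommGroup V'] [Module D V']
  {innV : V → V → D} {innV' : V' → V' → D}

def IsAdjoint (innV : V → V → D) (innV' : V' → V' → D) (T : V →ₗ[D] V') (S : V' →ₗ[D] V) :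
    Prop :=
  ∀ (v : V) (v' : V'), innV' (T v) v' = innV v (S v')

theorem IsAdjoint.unique (hV : IsHermForm τ ε innV)
    (hndV : ∀ v : V, (∀ u : V, innV v u = 0) → v = 0) {T : V →ₗ[D] V'} {S₁ S₂ : V' →ₗ[D] V}
    (h₁ : IsAdjoint innV innV' T S₁) (h₂ : IsAdjoint innV innV' T S₂) : S₁ = S₂ :=
  LinearMap.ext fun v' => hV.eq_of_inner_right_eq hndV fun v => (h₁ v v').symm.trans (h₂ v v')

theorem IsAdjoint.neg_comp_of_skew (hV' : IsHermForm τ ε' innV') {w : V →ₗ[D] V'}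
    {wstar : V' →ₗ[D] V} (hw : IsAdjoint innV innV' w wstar) {X : V →ₗ[D] V}
    (hX : ∀ v₁ v₂, innV (X v₁) v₂ = -innV v₁ (X v₂)) :
    IsAdjoint innV innV' (-(w ∘ₗ X)) (X ∘ₗ wstar) := fun v v' => by
  simp only [LinearMap.neg_apply, LinearMap.comp_apply]
  rw [hV'.inner_neg_left, hw, hX, neg_neg]

theorem IsAdjoint.comp_of_skew (hV : IsHermForm τ ε innV) {w : V →ₗ[D] V'}
    {wstar : V' →ₗ[D] V} (hw : IsAdjoint innV innV' w wstar) {X' : V' →ₗ[D] V'}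
    (hX' : ∀ u₁ u₂, innV' (X' u₁) u₂ = -innV' u₁ (X' u₂)) :
    IsAdjoint innV innV' (X' ∘ₗ w) (-(wstar ∘ₗ X')) := fun v v' => by
  simp only [LinearMap.neg_apply, LinearMap.comp_apply]
  rw [hX', hw, hV.inner_neg_right]

end Adjoint

theorem two_mul_one_half_mul {F : Type*} [Field F] [CharZero F] (x : F) :
    2 * ((1 / 2 : F) * x) = x := by
  rw [← mul_assoc, mul_one_div_cancel two_ne_zero, one_mul]

/- `⟨w₁, w₂⟩_W := tr_F(w₁^⋆ ∘ w₂)`: below, the adjoint `w₁^⋆` of `w₁` is any `A` with the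
adjoint property (it is unique by nondegeneracy).  `B(X, Y) := (1/2)·tr_F(X ∘ Y)` and the
moment maps are `M(w) = wstar ∘ w`, `M'(w) = w ∘ wstar`. -/
theorem stmt2_general
    (F : Type*) [Field F] [CharZero F]
    (D : Type*) [Field D] [Algebra F D]
    (τ : D →ₐ[F] D)
    (ε : D)
    (V V' : Type*)
    [AddCommGroup V] [Module D V] [FiniteDimensional D V]
    [AddCommGroup V'] [Module D V'] [FiniteDimensional D V']
    (innV : V → V → D) (innV' : V' → V' → D)
    (hV : IsHermForm τ ε innV)
    (hV' : IsHermForm τ (-ε) innV')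
    (hndV : ∀ v : V, (∀ u : V, innV v u = 0) → v = 0)
    (w : V →ₗ[D] V') (wstar : V' →ₗ[D] V)
    (hw : ∀ (v : V) (v' : V'), innV' (w v) v' = innV v (wstar v')) :
    -- for skew-adjoint `X`: `⟨X·w, w⟩_W = 2·B(X, M(w))`, where `X·w = −w∘X`
    (∀ X : V →ₗ[D] V,
      (∀ v₁ v₂, innV (X v₁) v₂ = - innV v₁ (X v₂)) →
      ∀ A : V' →ₗ[D] V,
        (∀ (v : V) (v' : V'), innV' ((-(w ∘ₗ X)) v) v' = innV v (A v')) →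
        Algebra.trace F D (LinearMap.trace D V (A ∘ₗ w))
          = 2 * ((1 / 2 : F) *
              Algebra.trace F D (LinearMap.trace D V (X ∘ₗ (wstar ∘ₗ w))))) ∧
    -- for skew-adjoint `X'`: `⟨X'·w, w⟩_W = 2·B(X', −M'(w))`, where `X'·w = X'∘w`
    (∀ X' : V' →ₗ[D] V',
      (∀ u₁ u₂, innV' (X' u₁) u₂ = - innV' u₁ (X' u₂)) →
      ∀ A' : V' →ₗ[D] V,
        (∀ (v : V) (v' : V'), innV' ((X' ∘ₗ w) v) v' = innV v (A' v')) →
        Algebra.trace F D (LinearMap.trace D V (A' ∘ₗ w))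
          = 2 * ((1 / 2 : F) *
              Algebra.trace F D (LinearMap.trace D V' (X' ∘ₗ (-(w ∘ₗ wstar)))))) := by
  refine ⟨fun X hX A hA => ?_, fun X' hX' A' hA' => ?_⟩
  · obtain rfl : A = X ∘ₗ wstar :=
      IsAdjoint.unique hV hndV hA (IsAdjoint.neg_comp_of_skew hV' hw hX)
    rw [two_mul_one_half_mul, LinearMap.comp_assoc]
  · obtain rfl : A' = -(wstar ∘ₗ X') :=
      IsAdjoint.unique hV hndV hA' (IsAdjoint.comp_of_skew hV hw hX')
    simp only [two_mul_one_half_mul, LinearMap.neg_comp, LinearMap.comp_neg, map_neg,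
      LinearMap.comp_assoc]
    rw [LinearMap.trace_comp_cycle]

theorem stmt2
    (F : Type*) [Field F] [CharZero F]
    (D : Type*) [Field D] [Algebra F D] [FiniteDimensional F D]
    (τ : D →ₐ[F] D) (hτ : ∀ a, τ (τ a) = a)
    (ε : D) (hε : ε = 1 ∨ ε = -1)
    (V V' : Type*)
    [AddCommGroup V] [Module D V] [FiniteDimensional D V]
    [AddCommGroup V'] [Module D V'] [FiniteDimensional D V']
    (innV : V → V → D) (innV' : V' → V' → D)
    (hV : IsHermForm τ ε innV)
    (hV' : IsHermForm τ (-ε) innV')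
    (hndV : ∀ v : V, (∀ u : V, innV v u = 0) → v = 0)
    (hndV' : ∀ v' : V', (∀ u' : V', innV' v' u' = 0) → v' = 0)
    -- every `D`-linear map `V → V'` admits an adjoint
    (hadj_ex : ∀ T : V →ₗ[D] V', ∃ S : V' →ₗ[D] V,
      ∀ (v : V) (v' : V'), innV' (T v) v' = innV v (S v'))
    (w : V →ₗ[D] V') (wstar : V' →ₗ[D] V)
    (hw : ∀ (v : V) (v' : V'), innV' (w v) v' = innV v (wstar v')) :
    -- for skew-adjoint `X`: `⟨X·w, w⟩_W = 2·B(X, M(w))`, where `X·w = −w∘X`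
    (∀ X : V →ₗ[D] V,
      (∀ v₁ v₂, innV (X v₁) v₂ = - innV v₁ (X v₂)) →
      ∀ A : V' →ₗ[D] V,
        (∀ (v : V) (v' : V'), innV' ((-(w ∘ₗ X)) v) v' = innV v (A v')) →
        Algebra.trace F D (LinearMap.trace D V (A ∘ₗ w))
          = 2 * ((1 / 2 : F) *
              Algebra.trace F D (LinearMap.trace D V (X ∘ₗ (wstar ∘ₗ w))))) ∧
    -- for skew-adjoint `X'`: `⟨X'·w, w⟩_W = 2·B(X', −M'(w))`, where `X'·w = X'∘w`
    (∀ X' : V' →ₗ[D] V',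
      (∀ u₁ u₂, innV' (X' u₁) u₂ = - innV' u₁ (X' u₂)) →
      ∀ A' : V' →ₗ[D] V,
        (∀ (v : V) (v' : V'), innV' ((X' ∘ₗ w) v) v' = innV v (A' v')) →
        Algebra.trace F D (LinearMap.trace D V (A' ∘ₗ w))
          = 2 * ((1 / 2 : F) *
              Algebra.trace F D (LinearMap.trace D V' (X' ∘ₗ (-(w ∘ₗ wstar)))))) :=
  stmt2_general F D τ ε V V' innV innV' hV hV' hndV w wstar hw
end

section
/- Assume ⟨·,·⟩_V and ⟨·,·⟩_{V'} are nondegenerate and that every D-linear map between V and V' (in either direction) admits an adjoint. Then the pairing ⟨w₁,w₂⟩_W = tr_F(w₁^⋆ ∘ w₂) on W := Hom_D(V,V') is F-bilinear, antisymmetric (⟨w₂,w₁⟩_W = −⟨w₁,w₂⟩_W for all w₁, w₂ ∈ W), and nondegenerate; in particular W is naturally a symplectic F-vector space. -/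
open Matrix

def IsFormAdjoint {D V V' : Type*} [Semiring D] [AddCommMonoid V] [Module D V]
    [AddCommMonoid V'] [Module D V'] (innV : V → V → D) (innV' : V' → V' → D)
    (T : V →ₗ[D] V') (S : V' →ₗ[D] V) : Prop :=
  ∀ v v', innV' (T v) v' = innV v (S v')

def gramMatrix {D V ι : Type*} (inn : V → V → D) (b : ι → V) : Matrix ι ι D :=
  Matrix.of fun i j => inn (b i) (b j)

namespace IsHermForm

variable {F D : Type*} [Field F] [Field D] [Algebra F D] {τ : D →ₐ[F] D} {ε : D}
  {V : Type*} [AddCommGroup V] [Module D V] {inn : V → V → D} {ι : Type*} [Fintype ι]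

def linearMapRight (h : IsHermForm τ ε inn) (v : V) : V →ₗ[D] D where
  toFun := inn v
  map_add' := h.2.1 v
  map_smul' a u := by rw [h.2.2.2.1, smul_eq_mul, mul_comm]; rfl

@[simp]
theorem linearMapRight_apply (h : IsHermForm τ ε inn) (v u : V) :
    h.linearMapRight v u = inn v u :=
  rfl

theorem sum_smul_right (h : IsHermForm τ ε inn) (c : ι → D) (b : ι → V) (v : V) :
    inn v (∑ i, c i • b i) = ∑ i, inn v (b i) * c i := by
  rw [← h.linearMapRight_apply, map_sum]
  exact Finset.sum_congr rfl fun i _ => by rw [map_smul, smul_eq_mul, mul_comm]; rfl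

theorem sum_smul_left (h : IsHermForm τ ε inn) (c : ι → D) (b : ι → V) (u : V) :
    inn (∑ i, c i • b i) u = ∑ i, τ (c i) * inn (b i) u := by
  have := map_sum (AddMonoidHom.mk' (inn · u) (h.1 · · u)) (fun i => c i • b i) Finset.univ
  simp only [AddMonoidHom.mk'_apply, h.2.2.1] at this
  exact this

theorem eq_zero_of_forall_inn_eq_zero (h : IsHermForm τ ε inn)
    (hnd : ∀ v : V, (∀ u : V, inn v u = 0) → v = 0) {v : V} (hv : ∀ u, inn u v = 0) :
    v = 0 :=
  hnd v fun u => by rw [h.2.2.2.2 u v, hv, map_zero, mul_zero]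

theorem isUnit_det_gramMatrix [DecidableEq ι] (h : IsHermForm τ ε inn)
    (hnd : ∀ v : V, (∀ u : V, inn v u = 0) → v = 0) (b : Module.Basis ι D V) :
    IsUnit (gramMatrix inn b).det := by
  rw [isUnit_iff_ne_zero, Ne, ← exists_mulVec_eq_zero_iff]
  rintro ⟨c, hc, hGc⟩
  have hbc : ∀ i, inn (b i) (∑ j, c j • b j) = 0 := fun i => by
    rw [h.sum_smul_right]
    simpa [gramMatrix, mulVec, dotProduct] using congrFun hGc i
  have hsum : ∑ j, c j • b j = 0 := h.eq_zero_of_forall_inn_eq_zero hnd fun w => by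
    rw [← b.sum_repr w, h.sum_smul_left]
    simp [hbc]
  exact hc (funext (Fintype.linearIndependent_iff.mp b.linearIndependent c hsum))

theorem transpose_map_toMatrix_mul_gramMatrix [DecidableEq ι] (h : IsHermForm τ ε inn)
    (b : Module.Basis ι D V) {S T : V →ₗ[D] V} (hST : IsFormAdjoint inn inn S T) :
    ((LinearMap.toMatrix b b S).map τ)ᵀ * gramMatrix inn b =
      gramMatrix inn b * LinearMap.toMatrix b b T := by
  ext j k
  simp only [mul_apply, transpose_apply, map_apply, LinearMap.toMatrix_apply, gramMatrix,
    of_apply]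
  rw [← h.sum_smul_left, ← h.sum_smul_right, b.sum_repr, b.sum_repr, hST]

theorem trace_eq_of_isFormAdjoint [FiniteDimensional D V] (h : IsHermForm τ ε inn)
    (hnd : ∀ v : V, (∀ u : V, inn v u = 0) → v = 0) {S T : V →ₗ[D] V}
    (hST : IsFormAdjoint inn inn S T) :
    LinearMap.trace D V T = τ (LinearMap.trace D V S) := by
  classical
  let b := Module.finBasis D V
  set G := gramMatrix inn b
  set M := LinearMap.toMatrix b b S
  set N := LinearMap.toMatrix b b T
  have hG : IsUnit G.det := h.isUnit_det_gramMatrix hnd b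
  have hMN : (M.map τ)ᵀ * G = G * N := h.transpose_map_toMatrix_mul_gramMatrix b hST
  rw [LinearMap.trace_eq_matrix_trace D b T, LinearMap.trace_eq_matrix_trace D b S]
  calc N.trace = (G⁻¹ * (G * N)).trace := by
        rw [← Matrix.mul_assoc, nonsing_inv_mul _ hG, Matrix.one_mul]
    _ = (M.map τ)ᵀ.trace := by
        rw [← hMN, trace_mul_comm, Matrix.mul_assoc, mul_nonsing_inv _ hG, Matrix.mul_one]
    _ = τ M.trace := by rw [trace_transpose, AddMonoidHom.map_trace]

end IsHermForm

namespace IsFormAdjoint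

variable {F D : Type*} [Field F] [Field D] [Algebra F D] {τ : D →ₐ[F] D} {ε : D}
  {V V' : Type*} [AddCommGroup V] [Module D V] [AddCommGroup V'] [Module D V']
  {innV : V → V → D} {innV' : V' → V' → D}

theorem add (hV : IsHermForm τ ε innV) (hV' : IsHermForm τ (-ε) innV')
    {T₁ T₂ : V →ₗ[D] V'} {S₁ S₂ : V' →ₗ[D] V} (h₁ : IsFormAdjoint innV innV' T₁ S₁)
    (h₂ : IsFormAdjoint innV innV' T₂ S₂) :
    IsFormAdjoint innV innV' (T₁ + T₂) (S₁ + S₂) := fun v v' => by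
  rw [LinearMap.add_apply, LinearMap.add_apply, hV'.1, hV.2.1, h₁, h₂]

theorem smul (hV : IsHermForm τ ε innV) (hV' : IsHermForm τ (-ε) innV')
    {T : V →ₗ[D] V'} {S : V' →ₗ[D] V} (h : IsFormAdjoint innV innV' T S) {a : D}
    (ha : τ a = a) : IsFormAdjoint innV innV' (a • T) (a • S) := fun v v' => by
  rw [LinearMap.smul_apply, LinearMap.smul_apply, hV'.2.2.1, hV.2.2.2.1, h, ha, mul_comm]

theorem comp_neg_comp (hV : IsHermForm τ ε innV) (hV' : IsHermForm τ (-ε) innV')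
    (hτ : Function.Involutive τ) (hε : ε * τ ε = 1) {T₁ T₂ : V →ₗ[D] V'}
    {S₁ S₂ : V' →ₗ[D] V} (h₁ : IsFormAdjoint innV innV' T₁ S₁)
    (h₂ : IsFormAdjoint innV innV' T₂ S₂) :
    IsFormAdjoint innV innV (S₁ ∘ₗ T₂) (-(S₂ ∘ₗ T₁)) := fun u v => by
  have hneg : innV u (-S₂ (T₁ v)) = -innV u (S₂ (T₁ v)) := map_neg (hV.linearMapRight u) _
  rw [LinearMap.comp_apply, LinearMap.neg_apply, LinearMap.comp_apply, hneg,
    hV.2.2.2.2 v, ← h₁, hV'.2.2.2.2, h₂, map_mul, map_neg, hτ]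
  linear_combination (-innV u (S₂ (T₁ v))) * hε

theorem eq_zero_of_adjoint_eq_zero (hV : IsHermForm τ ε innV)
    (hndV' : ∀ v' : V', (∀ u' : V', innV' v' u' = 0) → v' = 0) {T : V →ₗ[D] V'}
    {S : V' →ₗ[D] V} (h : IsFormAdjoint innV innV' T S) (hS : S = 0) : T = 0 := by
  ext v
  exact hndV' (T v) fun v' => by
    rw [h, hS, LinearMap.zero_apply, ← hV.linearMapRight_apply, map_zero]

end IsFormAdjoint

theorem LinearMap.exists_trace_comp_eq_one {D V V' : Type*} [Field D] [AddCommGroup V]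
    [Module D V] [FiniteDimensional D V] [AddCommGroup V'] [Module D V'] {A : V' →ₗ[D] V}
    (hA : A ≠ 0) : ∃ w : V →ₗ[D] V', LinearMap.trace D V (A ∘ₗ w) = 1 := by
  obtain ⟨v', hv'⟩ : ∃ v', A v' ≠ 0 := by
    by_contra! hzero
    exact hA (LinearMap.ext hzero)
  obtain ⟨f, hf⟩ := Module.Projective.exists_dual_eq_one D hv'
  refine ⟨f.smulRight v', ?_⟩
  have hcomp : A ∘ₗ f.smulRight v' = f.smulRight (A v') := by ext; simp
  rw [hcomp, LinearMap.trace_smulRight, hf]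

theorem Algebra.trace_one_ne_zero (F D : Type*) [Field F] [CharZero F] [Field D] [Algebra F D]
    [FiniteDimensional F D] : Algebra.trace F D 1 ≠ 0 := by
  rw [← map_one (algebraMap F D), Algebra.trace_algebraMap, nsmul_one]
  exact Nat.cast_ne_zero.mpr Module.finrank_pos.ne'

/- `ωW` is the pairing `⟨w₁, w₂⟩_W = tr_F(w₁^⋆ ∘ w₂)`, pinned down by `hωW` since adjoints
are unique. -/
theorem stmt3_general
    (F : Type*) [Field F] [CharZero F]
    (D : Type*) [Field D] [Algebra F D] [FiniteDimensional F D]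
    (τ : D →ₐ[F] D) (hτ : ∀ a, τ (τ a) = a)
    (ε : D) (hε : ε = 1 ∨ ε = -1)
    (V V' : Type*)
    [AddCommGroup V] [Module D V] [FiniteDimensional D V]
    [AddCommGroup V'] [Module D V']
    (innV : V → V → D) (innV' : V' → V' → D)
    (hV : IsHermForm τ ε innV)
    (hV' : IsHermForm τ (-ε) innV')
    (hndV : ∀ v : V, (∀ u : V, innV v u = 0) → v = 0)
    (hndV' : ∀ v' : V', (∀ u' : V', innV' v' u' = 0) → v' = 0)
    -- every `D`-linear map between `V` and `V'` (in either direction) admits an adjoint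
    (hadj_ex₁ : ∀ T : V →ₗ[D] V', ∃ S : V' →ₗ[D] V,
      ∀ (v : V) (v' : V'), innV' (T v) v' = innV v (S v'))
    (ωW : (V →ₗ[D] V') → (V →ₗ[D] V') → F)
    (hωW : ∀ (w₁ w₂ : V →ₗ[D] V') (A : V' →ₗ[D] V),
      (∀ (v : V) (v' : V'), innV' (w₁ v) v' = innV v (A v')) →
      ωW w₁ w₂ = Algebra.trace F D (LinearMap.trace D V (A ∘ₗ w₂))) :
    -- `F`-bilinear
    (∀ w₁ w₁' w₂ : V →ₗ[D] V', ωW (w₁ + w₁') w₂ = ωW w₁ w₂ + ωW w₁' w₂) ∧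
    (∀ w₁ w₂ w₂' : V →ₗ[D] V', ωW w₁ (w₂ + w₂') = ωW w₁ w₂ + ωW w₁ w₂') ∧
    (∀ (c : F) (w₁ w₂ : V →ₗ[D] V'), ωW (algebraMap F D c • w₁) w₂ = c * ωW w₁ w₂) ∧
    (∀ (c : F) (w₁ w₂ : V →ₗ[D] V'), ωW w₁ (algebraMap F D c • w₂) = c * ωW w₁ w₂) ∧
    -- antisymmetric
    (∀ w₁ w₂ : V →ₗ[D] V', ωW w₂ w₁ = - ωW w₁ w₂) ∧
    -- nondegenerate
    (∀ w₁ : V →ₗ[D] V', (∀ w₂ : V →ₗ[D] V', ωW w₁ w₂ = 0) → w₁ = 0) := by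
  have hadj_ex : ∀ w, ∃ A, IsFormAdjoint innV innV' w A := hadj_ex₁
  choose adj hadj using hadj_ex
  have hω : ∀ w₁ w₂, ωW w₁ w₂ = Algebra.trace F D (LinearMap.trace D V (adj w₁ ∘ₗ w₂)) :=
    fun w₁ w₂ => hωW w₁ w₂ (adj w₁) (hadj w₁)
  have hεε : ε * τ ε = 1 := by rcases hε with rfl | rfl <;> simp
  have htrτ : ∀ x, Algebra.trace F D (τ x) = Algebra.trace F D x :=
    Algebra.trace_eq_of_algEquiv (AlgEquiv.ofBijective τ (Function.Involutive.bijective hτ))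
  refine ⟨fun w₁ w₁' w₂ => ?_, fun w₁ w₂ w₂' => ?_, fun c w₁ w₂ => ?_, fun c w₁ w₂ => ?_,
    fun w₁ w₂ => ?_, fun w₁ hw₁ => ?_⟩
  · rw [hωW _ w₂ _ ((hadj w₁).add hV hV' (hadj w₁')), hω, hω, LinearMap.add_comp, map_add,
      map_add]
  · rw [hω, hω, hω, LinearMap.comp_add, map_add, map_add]
  · rw [hωW _ w₂ _ ((hadj w₁).smul hV hV' (τ.commutes c)), hω, LinearMap.smul_comp, map_smul,
      smul_eq_mul, ← Algebra.smul_def, map_smul, smul_eq_mul]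
  · rw [hω, hω, LinearMap.comp_smul, map_smul, smul_eq_mul, ← Algebra.smul_def, map_smul,
      smul_eq_mul]
  · have htr := hV.trace_eq_of_isFormAdjoint hndV ((hadj w₁).comp_neg_comp hV hV' hτ hεε (hadj w₂))
    rw [hω, hω, ← neg_neg (LinearMap.trace D V (adj w₂ ∘ₗ w₁)), ← map_neg, htr, map_neg, htrτ]
  · by_contra hne
    obtain ⟨w₂, hw₂⟩ :=
      LinearMap.exists_trace_comp_eq_one (mt ((hadj w₁).eq_zero_of_adjoint_eq_zero hV hndV') hne)
    exact Algebra.trace_one_ne_zero F D (by rw [← hw₂, ← hω, hw₁])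

theorem stmt3
    (F : Type*) [Field F] [CharZero F]
    (D : Type*) [Field D] [Algebra F D] [FiniteDimensional F D]
    (τ : D →ₐ[F] D) (hτ : ∀ a, τ (τ a) = a)
    (ε : D) (hε : ε = 1 ∨ ε = -1)
    (V V' : Type*)
    [AddCommGroup V] [Module D V] [FiniteDimensional D V]
    [AddCommGroup V'] [Module D V'] [FiniteDimensional D V']
    (innV : V → V → D) (innV' : V' → V' → D)
    (hV : IsHermForm τ ε innV)
    (hV' : IsHermForm τ (-ε) innV')
    (hndV : ∀ v : V, (∀ u : V, innV v u = 0) → v = 0)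
    (hndV' : ∀ v' : V', (∀ u' : V', innV' v' u' = 0) → v' = 0)
    -- every `D`-linear map between `V` and `V'` (in either direction) admits an adjoint
    (hadj_ex₁ : ∀ T : V →ₗ[D] V', ∃ S : V' →ₗ[D] V,
      ∀ (v : V) (v' : V'), innV' (T v) v' = innV v (S v'))
    (hadj_ex₂ : ∀ S : V' →ₗ[D] V, ∃ T : V →ₗ[D] V',
      ∀ (v' : V') (v : V), innV (S v') v = innV' v' (T v))
    (ωW : (V →ₗ[D] V') → (V →ₗ[D] V') → F)
    (hωW : ∀ (w₁ w₂ : V →ₗ[D] V') (A : V' →ₗ[D] V),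
      (∀ (v : V) (v' : V'), innV' (w₁ v) v' = innV v (A v')) →
      ωW w₁ w₂ = Algebra.trace F D (LinearMap.trace D V (A ∘ₗ w₂))) :
    -- `F`-bilinear
    (∀ w₁ w₁' w₂ : V →ₗ[D] V', ωW (w₁ + w₁') w₂ = ωW w₁ w₂ + ωW w₁' w₂) ∧
    (∀ w₁ w₂ w₂' : V →ₗ[D] V', ωW w₁ (w₂ + w₂') = ωW w₁ w₂ + ωW w₁ w₂') ∧
    (∀ (c : F) (w₁ w₂ : V →ₗ[D] V'), ωW (algebraMap F D c • w₁) w₂ = c * ωW w₁ w₂) ∧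
    (∀ (c : F) (w₁ w₂ : V →ₗ[D] V'), ωW w₁ (algebraMap F D c • w₂) = c * ωW w₁ w₂) ∧
    -- antisymmetric
    (∀ w₁ w₂ : V →ₗ[D] V', ωW w₂ w₁ = - ωW w₁ w₂) ∧
    -- nondegenerate
    (∀ w₁ : V →ₗ[D] V', (∀ w₂ : V →ₗ[D] V', ωW w₁ w₂ = 0) → w₁ = 0) :=
  stmt3_general F D τ hτ ε hε V V' innV innV' hV hV' hndV hndV' hadj_ex₁ ωW hωW
end

section
/- Assume ⟨·,·⟩_V and ⟨·,·⟩_{V'} are nondegenerate and that every D-linear map between V and V' admits an adjoint. Let w ∈ Hom_D(V,V') with adjoint w^⋆, set Γ := w^⋆∘w and Γ' := w∘w^⋆, and define ι(X,X') := −w∘X + X'∘w for X ∈ End_D(V), X' ∈ End_D(V'). Then for all skew-adjoint X₁, X₂ ∈ End_D(V) and all skew-adjoint X'₁, X'₂ ∈ End_D(V'): ⟨ι(X₁,X'₁), ι(X₂,X'₂)⟩_W = B(X₁∘X₂ − X₂∘X₁, Γ) + B(X'₁∘X'₂ − X'₂∘X'₁, −Γ'). In other words, ι is an isometry from g ⊕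 g' (equipped with the symplectic forms ⟨X₁,X₂⟩_Γ := B([X₁,X₂],Γ) on g and ⟨X'₁,X'₂⟩_{−Γ'} := B([X'₁,X'₂],−Γ') on g', where g and g' denote the spaces of skew-adjoint endomorphisms of V and V' respectively, and the two summands are mapped to mutually orthogonal subspaces) into (W, ⟨·,·⟩_W). -/
open Module LinearMap
open scoped Matrix

section SesqForm

variable {K V : Type*} [Field K] [AddCommGroup V] [Module K V] {σ : K →+* K}
  (B : V →ₛₗ[σ] V →ₗ[K] K)

section Basis

variable {n : Type*} [Fintype n] [DecidableEq n] (b : Basis n K V)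

theorem toMatrix₂_compl₂_eq_mul (S : V →ₗ[K] V) :
    toMatrix₂ b b (B.compl₂ S) = toMatrix₂ b b B * toMatrix b b S := by
  ext i j
  conv_lhs => rw [toMatrix₂_apply, compl₂_apply, ← b.sum_repr (S (b j))]
  simp [-Basis.sum_repr, Matrix.mul_apply, toMatrix_apply, mul_comm]

theorem toMatrix₂_comp_eq_mul (T : V →ₗ[K] V) :
    toMatrix₂ b b (B.comp T) = ((toMatrix b b T).map σ)ᵀ * toMatrix₂ b b B := by
  ext i j
  conv_lhs => rw [toMatrix₂_apply, LinearMap.comp_apply, ← b.sum_repr (T (b i))]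
  simp [-Basis.sum_repr, Matrix.mul_apply, toMatrix_apply]

theorem det_toMatrix₂_ne_zero (hB : B.SeparatingRight) : (toMatrix₂ b b B).det ≠ 0 := by
  intro h
  obtain ⟨c, hc, hMc⟩ := Matrix.exists_mulVec_eq_zero_iff.mpr h
  refine hc (b.equivFun.symm.injective ?_)
  refine (hB _ fun x => ?_).trans (map_zero _).symm
  rw [← b.equivFun.symm_apply_apply x, ← dotProduct_toMatrix₂_mulVec (σ₂ := RingHom.id K)]
  simp [hMc]

end Basis

theorem trace_eq_map_trace_of_adjoint [FiniteDimensional K V] (hB : B.SeparatingRight)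
    {T S : V →ₗ[K] V} (h : ∀ x y, B (T x) y = B x (S y)) :
    trace K V S = σ (trace K V T) := by
  let b := finBasis K V
  set M := toMatrix₂ b b B
  have hM : IsUnit M.det := (det_toMatrix₂_ne_zero B b hB).isUnit
  have hST : M * toMatrix b b S = ((toMatrix b b T).map σ)ᵀ * M := by
    rw [← toMatrix₂_compl₂_eq_mul, ← toMatrix₂_comp_eq_mul]
    congr 1
    ext x y
    exact (h x y).symm
  have hS : toMatrix b b S = M⁻¹ * ((toMatrix b b T).map σ)ᵀ * M := by
    rw [Matrix.mul_assoc, ← hST, ← Matrix.mul_assoc, Matrix.nonsing_inv_mul _ hM, Matrix.one_mul]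
  rw [trace_eq_matrix_trace K b, trace_eq_matrix_trace K b, hS,
    Matrix.trace_conj' ((Matrix.isUnit_iff_isUnit_det _).mpr hM), Matrix.trace_transpose]
  exact (AddMonoidHom.map_trace σ _).symm

end SesqForm

section AlgebraTrace

variable {F K V : Type*} [Field F] [Field K] [Algebra F K] [FiniteDimensional F K]
  [AddCommGroup V] [Module K V] [FiniteDimensional K V] {τ : K →ₐ[F] K}
  (B : V →ₛₗ[(τ : K →+* K)] V →ₗ[K] K)

theorem algebraTrace_trace_eq_of_adjoint (hB : B.SeparatingRight) {T S : V →ₗ[K] V}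
    (h : ∀ x y, B (T x) y = B x (S y)) :
    Algebra.trace F K (trace K V S) = Algebra.trace F K (trace K V T) := by
  rw [trace_eq_map_trace_of_adjoint B hB h]
  exact Algebra.trace_eq_of_algEquiv (AlgEquiv.ofBijective τ τ.bijective) _

theorem algebraTrace_trace_comp_eq_zero_of_skew [CharZero F] (hB : B.SeparatingRight)
    {U X : V →ₗ[K] V} (hU : ∀ x y, B (U x) y = B x (U y))
    (hX : ∀ x y, B (X x) y = -B x (X y)) :
    Algebra.trace F K (trace K V (U ∘ₗ X)) = 0 := by
  have h := algebraTrace_trace_eq_of_adjoint B hB (T := X ∘ₗ U) (S := -(U ∘ₗ X))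
    fun x y => by simp [hX, hU]
  rw [map_neg, map_neg, ← trace_comp_comm' X U] at h
  exact self_eq_neg.mp h.symm

end AlgebraTrace

section Adjoint

variable {K V W : Type*} [Field K] [AddCommGroup V] [Module K V] [AddCommGroup W] [Module K W]
  {σ : K →+* K} {B : V →ₛₗ[σ] V →ₗ[K] K} {B' : W →ₛₗ[σ] W →ₗ[K] K}

theorem eq_of_forall_apply_eq_of_separatingRight (hB : B.SeparatingRight) {A A₀ : W →ₗ[K] V}
    (h : ∀ x u, B x (A u) = B x (A₀ u)) : A = A₀ :=
  LinearMap.ext fun u => sub_eq_zero.mp <| hB _ fun x => by rw [map_sub, h, sub_self]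

theorem apply_comp_add_comp_eq_of_skew {X Y : V →ₗ[K] V}
    (hX : ∀ x y, B (X x) y = -B x (X y)) (hY : ∀ x y, B (Y x) y = -B x (Y y)) (x y : V) :
    B ((X ∘ₗ Y + Y ∘ₗ X) x) y = B x ((X ∘ₗ Y + Y ∘ₗ X) y) := by
  simp [hX, hY, add_comm]

variable {w : V →ₗ[K] W} {wstar : W →ₗ[K] V}

theorem apply_neg_comp_add_comp_eq (hw : ∀ v u, B' (w v) u = B v (wstar u))
    {X : V →ₗ[K] V} {X' : W →ₗ[K] W}
    (hX : ∀ x y, B (X x) y = -B x (X y)) (hX' : ∀ x y, B' (X' x) y = -B' x (X' y))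
    (v : V) (u : W) :
    B' ((-(w ∘ₗ X) + X' ∘ₗ w) v) u = B v ((X ∘ₗ wstar - wstar ∘ₗ X') u) := by
  simp [hw, hX, hX', sub_eq_add_neg, add_comm]

theorem apply_adjoint_comp_eq_neg (hw : ∀ v u, B' (w v) u = B v (wstar u))
    (hw' : ∀ u v, B (wstar u) v = -B' u (w v)) (x y : V) :
    B ((wstar ∘ₗ w) x) y = -B x ((wstar ∘ₗ w) y) := by
  simp [hw, hw']

theorem apply_comp_adjoint_eq_neg (hw : ∀ v u, B' (w v) u = B v (wstar u))
    (hw' : ∀ u v, B (wstar u) v = -B' u (w v)) (x y : W) :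
    B' ((w ∘ₗ wstar) x) y = -B' x ((w ∘ₗ wstar) y) := by
  simp [hw, hw']

theorem apply_adjoint_comp_comp_eq_of_skew (hw : ∀ v u, B' (w v) u = B v (wstar u))
    (hw' : ∀ u v, B (wstar u) v = -B' u (w v)) {X' : W →ₗ[K] W}
    (hX' : ∀ x y, B' (X' x) y = -B' x (X' y)) (x y : V) :
    B ((wstar ∘ₗ X' ∘ₗ w) x) y = B x ((wstar ∘ₗ X' ∘ₗ w) y) := by
  simp [hw, hw', hX']

end Adjoint

namespace IsHermForm

variable {F D V : Type*} [Field F] [Field D] [Algebra F D] {τ : D →ₐ[F] D} {ε : D}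
  [AddCommGroup V] [Module D V] {inn : V → V → D}

def toSesqForm (h : IsHermForm τ ε inn) : V →ₛₗ[(τ : D →+* D)] V →ₗ[D] D :=
  LinearMap.mk₂'ₛₗ _ _ inn h.1 h.2.2.1 h.2.1 fun a v u => (h.2.2.2.1 a v u).trans (mul_comm _ _)

@[simp]
theorem toSesqForm_apply (h : IsHermForm τ ε inn) (v u : V) : h.toSesqForm v u = inn v u :=
  rfl

theorem separatingRight (h : IsHermForm τ ε inn) (hnd : ∀ v, (∀ u, inn v u = 0) → v = 0) :
    h.toSesqForm.SeparatingRight := fun u hu =>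
  hnd u fun v => by rw [h.2.2.2.2, ← h.toSesqForm_apply, hu, map_zero, mul_zero]

theorem apply_adjoint_left_eq_neg (hτ : ∀ a, τ (τ a) = a) (hε : ε = 1 ∨ ε = -1)
    {W : Type*} [AddCommGroup W] [Module D W] {inn' : W → W → D}
    (h : IsHermForm τ ε inn) (h' : IsHermForm τ (-ε) inn') {w : V →ₗ[D] W} {wstar : W →ₗ[D] V}
    (hw : ∀ v u, inn' (w v) u = inn v (wstar u)) (u : W) (v : V) :
    inn (wstar u) v = -inn' u (w v) := by
  rw [h.2.2.2.2, ← hw, h'.2.2.2.2, map_mul, hτ]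
  rcases hε with rfl | rfl <;> simp

end IsHermForm

/- `ι(X, X') = −w∘X + X'∘w`; `⟨w₁, w₂⟩_W = tr_F(w₁^⋆ ∘ w₂)` where `w₁^⋆` is the (unique)
adjoint `A` of `w₁`; `B(X, Y) = (1/2)·tr_F(X∘Y)`; `Γ = wstar∘w`, `Γ' = w∘wstar`. -/
theorem stmt4_general
    (F : Type*) [Field F] [CharZero F]
    (D : Type*) [Field D] [Algebra F D] [FiniteDimensional F D]
    (τ : D →ₐ[F] D) (hτ : ∀ a, τ (τ a) = a)
    (ε : D) (hε : ε = 1 ∨ ε = -1)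
    (V V' : Type*)
    [AddCommGroup V] [Module D V] [FiniteDimensional D V]
    [AddCommGroup V'] [Module D V'] [FiniteDimensional D V']
    (innV : V → V → D) (innV' : V' → V' → D)
    (hV : IsHermForm τ ε innV)
    (hV' : IsHermForm τ (-ε) innV')
    (hndV : ∀ v : V, (∀ u : V, innV v u = 0) → v = 0)
    (hndV' : ∀ v' : V', (∀ u' : V', innV' v' u' = 0) → v' = 0)
    (w : V →ₗ[D] V') (wstar : V' →ₗ[D] V)
    (hw : ∀ (v : V) (v' : V'), innV' (w v) v' = innV v (wstar v')) :
    ∀ (X₁ X₂ : V →ₗ[D] V) (X'₁ X'₂ : V' →ₗ[D] V'),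
      (∀ v u, innV (X₁ v) u = - innV v (X₁ u)) →
      (∀ v u, innV (X₂ v) u = - innV v (X₂ u)) →
      (∀ u u', innV' (X'₁ u) u' = - innV' u (X'₁ u')) →
      (∀ u u', innV' (X'₂ u) u' = - innV' u (X'₂ u')) →
      ∀ A : V' →ₗ[D] V,
        -- `A` is the adjoint of `ι(X₁, X'₁) = −w∘X₁ + X'₁∘w`
        (∀ (v : V) (v' : V'), innV' ((-(w ∘ₗ X₁) + X'₁ ∘ₗ w) v) v' = innV v (A v')) →
        -- `⟨ι(X₁,X'₁), ι(X₂,X'₂)⟩_W = B([X₁,X₂], Γ) + B([X'₁,X'₂], −Γ')`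
        Algebra.trace F D (LinearMap.trace D V (A ∘ₗ (-(w ∘ₗ X₂) + X'₂ ∘ₗ w)))
          = (1 / 2 : F) * Algebra.trace F D
              (LinearMap.trace D V ((X₁ ∘ₗ X₂ - X₂ ∘ₗ X₁) ∘ₗ (wstar ∘ₗ w)))
            + (1 / 2 : F) * Algebra.trace F D
              (LinearMap.trace D V' ((X'₁ ∘ₗ X'₂ - X'₂ ∘ₗ X'₁) ∘ₗ (-(w ∘ₗ wstar)))) := by
  intro X₁ X₂ X'₁ X'₂ hX₁ hX₂ hX'₁ hX'₂ A hA
  let B := hV.toSesqForm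
  let B' := hV'.toSesqForm
  have hB : B.SeparatingRight := hV.separatingRight hndV
  have hB' : B'.SeparatingRight := hV'.separatingRight hndV'
  have hw' := hV.apply_adjoint_left_eq_neg hτ hε hV' hw
  obtain rfl : A = X₁ ∘ₗ wstar - wstar ∘ₗ X'₁ :=
    eq_of_forall_apply_eq_of_separatingRight hB fun v u =>
      (hA v u).symm.trans (apply_neg_comp_add_comp_eq (B := B) (B' := B') hw hX₁ hX'₁ v u)
  have hΓ := algebraTrace_trace_comp_eq_zero_of_skew (F := F) B hB
    (apply_comp_add_comp_eq_of_skew hX₁ hX₂)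
    (apply_adjoint_comp_eq_neg (B := B) (B' := B') hw hw')
  have hΓ' := algebraTrace_trace_comp_eq_zero_of_skew (F := F) B' hB'
    (apply_comp_add_comp_eq_of_skew hX'₁ hX'₂)
    (apply_comp_adjoint_eq_neg (B := B) (B' := B') hw hw')
  have hmixed₁ := algebraTrace_trace_comp_eq_zero_of_skew (F := F) B hB
    (apply_adjoint_comp_comp_eq_of_skew (B := B) (B' := B') hw hw' hX'₂) hX₁
  have hmixed₂ := algebraTrace_trace_comp_eq_zero_of_skew (F := F) B hB
    (apply_adjoint_comp_comp_eq_of_skew (B := B) (B' := B') hw hw' hX'₁) hX₂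
  rw [trace_comp_comm'] at hmixed₁
  have hcyc₁ := trace_comp_comm' X₂ (X₁ ∘ₗ wstar ∘ₗ w)
  have hcyc₂ := trace_comp_comm' (X'₁ ∘ₗ X'₂ ∘ₗ w) wstar
  simp only [add_comp, sub_comp, comp_add, comp_neg, comp_assoc, map_add,
    map_sub, map_neg] at hΓ hΓ' hmixed₁ hmixed₂ hcyc₁ hcyc₂ ⊢
  rw [hcyc₁, hcyc₂]
  linear_combination -(1 / 2 : F) * hΓ - (1 / 2 : F) * hΓ' + hmixed₁ + hmixed₂

theorem stmt4
    (F : Type*) [Field F] [CharZero F]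
    (D : Type*) [Field D] [Algebra F D] [FiniteDimensional F D]
    (τ : D →ₐ[F] D) (hτ : ∀ a, τ (τ a) = a)
    (ε : D) (hε : ε = 1 ∨ ε = -1)
    (V V' : Type*)
    [AddCommGroup V] [Module D V] [FiniteDimensional D V]
    [AddCommGroup V'] [Module D V'] [FiniteDimensional D V']
    (innV : V → V → D) (innV' : V' → V' → D)
    (hV : IsHermForm τ ε innV)
    (hV' : IsHermForm τ (-ε) innV')
    (hndV : ∀ v : V, (∀ u : V, innV v u = 0) → v = 0)
    (hndV' : ∀ v' : V', (∀ u' : V', innV' v' u' = 0) → v' = 0)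
    -- every `D`-linear map between `V` and `V'` admits an adjoint
    (hadj_ex₁ : ∀ T : V →ₗ[D] V', ∃ S : V' →ₗ[D] V,
      ∀ (v : V) (v' : V'), innV' (T v) v' = innV v (S v'))
    (hadj_ex₂ : ∀ S : V' →ₗ[D] V, ∃ T : V →ₗ[D] V',
      ∀ (v' : V') (v : V), innV (S v') v = innV' v' (T v))
    (w : V →ₗ[D] V') (wstar : V' →ₗ[D] V)
    (hw : ∀ (v : V) (v' : V'), innV' (w v) v' = innV v (wstar v')) :
    ∀ (X₁ X₂ : V →ₗ[D] V) (X'₁ X'₂ : V' →ₗ[D] V'),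
      (∀ v u, innV (X₁ v) u = - innV v (X₁ u)) →
      (∀ v u, innV (X₂ v) u = - innV v (X₂ u)) →
      (∀ u u', innV' (X'₁ u) u' = - innV' u (X'₁ u')) →
      (∀ u u', innV' (X'₂ u) u' = - innV' u (X'₂ u')) →
      ∀ A : V' →ₗ[D] V,
        -- `A` is the adjoint of `ι(X₁, X'₁) = −w∘X₁ + X'₁∘w`
        (∀ (v : V) (v' : V'), innV' ((-(w ∘ₗ X₁) + X'₁ ∘ₗ w) v) v' = innV v (A v')) →
        -- `⟨ι(X₁,X'₁), ι(X₂,X'₂)⟩_W = B([X₁,X₂], Γ) + B([X'₁,X'₂], −Γ')`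
        Algebra.trace F D (LinearMap.trace D V (A ∘ₗ (-(w ∘ₗ X₂) + X'₂ ∘ₗ w)))
          = (1 / 2 : F) * Algebra.trace F D
              (LinearMap.trace D V ((X₁ ∘ₗ X₂ - X₂ ∘ₗ X₁) ∘ₗ (wstar ∘ₗ w)))
            + (1 / 2 : F) * Algebra.trace F D
              (LinearMap.trace D V' ((X'₁ ∘ₗ X'₂ - X'₂ ∘ₗ X'₁) ∘ₗ (-(w ∘ₗ wstar)))) :=
  stmt4_general F D τ hτ ε hε V V' innV innV' hV hV' hndV hndV' w wstar hw
end

section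
/- Assume ⟨·,·⟩_V and ⟨·,·⟩_{V'} are nondegenerate and that V and V' are finite-dimensional over the division ring D. Suppose V = V_b ⊕ V_a is a direct sum of D-submodules with ⟨V_b, V_a⟩_V = 0. Let w : V → V' be a D-linear map admitting an adjoint w^⋆, and suppose w^⋆∘w maps V_b into V_b and restricts to a bijection of V_b. Then: (i) the restriction of w to V_b is injective, so w maps V_b isomorphically onto V'_b := w(V_b); (ii) the restriction of ⟨·,·⟩_{V'} to V'_b is nondegenerate, and V' = V'_b ⊕ V'_a, where V'_a := {v' ∈ V' : ⟨v', u⟩_{V'} = 0 for all u ∈ V'_b} is the orthogonal complement of V'_b; (iii) w(V_a) ⊆ V'_a. -/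
/-- An `ε`-Hermitian form on a right `D`-module `V` (encoded as a left `Dᵐᵒᵖ`-module). -/
def IsHermitianForm {D : Type*} [DivisionRing D] (τ : D → D) (ε : D)
    {V : Type*} [AddCommGroup V] [Module Dᵐᵒᵖ V] (inn : V → V → D) : Prop :=
  (∀ v₁ v₂ u, inn (v₁ + v₂) u = inn v₁ u + inn v₂ u) ∧
  (∀ v u₁ u₂, inn v (u₁ + u₂) = inn v u₁ + inn v u₂) ∧
  (∀ (a : D) (v u : V), inn (MulOpposite.op a • v) u = τ a * inn v u) ∧
  (∀ (a : D) (v u : V), inn v (MulOpposite.op a • u) = inn v u * a) ∧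
  (∀ v u, inn u v = ε * τ (inn v u))

/-!
Since `w⋆ ∘ w` maps `V_b` onto `V_b`, the pairings `⟨w v, w c⟩ = ⟨v, w⋆ w c⟩` with `c ∈ V_b`
run over all pairings `⟨v, b⟩` with `b ∈ V_b`, and the form on `V_b` is nondegenerate because
`V_b ⟂ V_a`. This gives nondegeneracy on `w(V_b)`, hence uniqueness of the decomposition
of `V'`. For existence, split `w⋆ x = w⋆ w b + a` along `V_b ⊕ V_a`: then `x - w b` is
orthogonal to `w(V_b)`.
-/

section HermitianForm

variable {D : Type*} [DivisionRing D] {τ : D → D} {ε : D}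
  {V : Type*} [AddCommGroup V] [Module Dᵐᵒᵖ V] {inn : V → V → D}

theorem IsHermitianForm.inn_sub_left (h : IsHermitianForm τ ε inn) (v₁ v₂ u : V) :
    inn (v₁ - v₂) u = inn v₁ u - inn v₂ u :=
  map_sub (AddMonoidHom.mk' (inn · u) fun a b => h.1 a b u) v₁ v₂

theorem IsHermitianForm.inn_eq_zero_comm (h : IsHermitianForm τ ε inn) (hτ : τ 0 = 0)
    {v u : V} (hvu : inn v u = 0) : inn u v = 0 := by
  rw [h.2.2.2.2 v u, hvu, hτ, mul_zero]

theorem IsHermitianForm.eq_zero_of_codisjoint (h : IsHermitianForm τ ε inn)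
    (hnd : ∀ v : V, (∀ u : V, inn v u = 0) → v = 0)
    {Vb Va : Submodule Dᵐᵒᵖ V} (hcodis : Codisjoint Vb Va)
    (horth : ∀ v ∈ Vb, ∀ u ∈ Va, inn v u = 0)
    {v : V} (hv : v ∈ Vb) (hvb : ∀ u ∈ Vb, inn v u = 0) : v = 0 := by
  refine hnd v fun u => ?_
  obtain ⟨b, a, hb, ha, rfl⟩ := Submodule.codisjoint_iff_exists_add_eq.mp hcodis u
  rw [h.2.1, hvb b hb, horth v hv a ha, add_zero]

theorem IsHermitianForm.existsUnique_add_of_nondegenerate (h : IsHermitianForm τ ε inn)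
    {W : Submodule Dᵐᵒᵖ V} (hW : ∀ v ∈ W, (∀ u ∈ W, inn v u = 0) → v = 0)
    (hex : ∀ x : V, ∃ p ∈ W, ∀ u ∈ W, inn (x - p) u = 0) (x : V) :
    ∃! p : V × V, p.1 ∈ W ∧ (∀ u ∈ W, inn p.2 u = 0) ∧ x = p.1 + p.2 := by
  obtain ⟨p, hp, hxp⟩ := hex x
  refine ⟨(p, x - p), ⟨hp, hxp, (add_sub_cancel p x).symm⟩, ?_⟩
  rintro ⟨q₁, q₂⟩ ⟨hq₁, hq₂, rfl⟩
  have hdiff : q₁ - p = q₁ + q₂ - p - q₂ := by abel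
  have hq₁p : q₁ - p = 0 := hW _ (W.sub_mem hq₁ hp) fun u hu => by
    rw [hdiff, h.inn_sub_left, hxp u hu, hq₂ u hu, sub_zero]
  obtain rfl : q₁ = p := sub_eq_zero.1 hq₁p
  simp

end HermitianForm

section Adjoint

variable {D : Type*} [DivisionRing D] {τ : D → D} {ε : D}
  {V V' : Type*} [AddCommGroup V] [AddCommGroup V'] [Module Dᵐᵒᵖ V] [Module Dᵐᵒᵖ V']
  {innV : V → V → D} {innV' : V' → V' → D} {Vb Va : Submodule Dᵐᵒᵖ V}
  {w : V →ₗ[Dᵐᵒᵖ] V'} {wstar : V' →ₗ[Dᵐᵒᵖ] V}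

theorem nondegenerate_map_of_surjOn_adjoint_comp (hV : IsHermitianForm τ ε innV)
    (hndV : ∀ v : V, (∀ u : V, innV v u = 0) → v = 0)
    (hcodis : Codisjoint Vb Va) (horth : ∀ v ∈ Vb, ∀ u ∈ Va, innV v u = 0)
    (hadj : ∀ (v : V) (v' : V'), innV' (w v) v' = innV v (wstar v'))
    (hsurj : Set.SurjOn (⇑(wstar ∘ₗ w)) (Vb : Set V) (Vb : Set V)) :
    ∀ v' ∈ Vb.map w, (∀ u ∈ Vb.map w, innV' v' u = 0) → v' = 0 := by
  rintro _ ⟨v, hv, rfl⟩ hperp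
  suffices v = 0 by rw [this, map_zero]
  refine hV.eq_zero_of_codisjoint hndV hcodis horth hv fun b hb => ?_
  obtain ⟨c, hc, rfl⟩ := hsurj hb
  rw [LinearMap.comp_apply, ← hadj]
  exact hperp _ ⟨c, hc, rfl⟩

theorem exists_map_sub_orthogonal_of_surjOn_adjoint_comp
    (hV' : IsHermitianForm τ ε innV') (hτ : τ 0 = 0)
    (hcodis : Codisjoint Vb Va) (horth : ∀ v ∈ Vb, ∀ u ∈ Va, innV v u = 0)
    (hadj : ∀ (v : V) (v' : V'), innV' (w v) v' = innV v (wstar v'))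
    (hsurj : Set.SurjOn (⇑(wstar ∘ₗ w)) (Vb : Set V) (Vb : Set V)) (x : V') :
    ∃ p ∈ Vb.map w, ∀ u ∈ Vb.map w, innV' (x - p) u = 0 := by
  obtain ⟨_, a, hsb, ha, hsum⟩ := Submodule.codisjoint_iff_exists_add_eq.mp hcodis (wstar x)
  obtain ⟨b, hb, rfl⟩ := hsurj hsb
  refine ⟨w b, ⟨b, hb, rfl⟩, ?_⟩
  rintro _ ⟨c, hc, rfl⟩
  refine hV'.inn_eq_zero_comm hτ ?_
  rw [LinearMap.comp_apply] at hsum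
  rw [hadj, map_sub, ← eq_sub_of_add_eq' hsum]
  exact horth c hc a ha

theorem map_orthogonal_map_of_mapsTo_adjoint_comp (hV : IsHermitianForm τ ε innV)
    (hτ : τ 0 = 0) (horth : ∀ v ∈ Vb, ∀ u ∈ Va, innV v u = 0)
    (hadj : ∀ (v : V) (v' : V'), innV' (w v) v' = innV v (wstar v'))
    (hmaps : Set.MapsTo (⇑(wstar ∘ₗ w)) (Vb : Set V) (Vb : Set V)) :
    ∀ v ∈ Va, ∀ u ∈ Vb.map w, innV' (w v) u = 0 := by
  rintro v hv _ ⟨b, hb, rfl⟩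
  rw [hadj]
  exact hV.inn_eq_zero_comm hτ (horth _ (hmaps hb) v hv)

end Adjoint
theorem stmt8_general
    (D : Type*) [DivisionRing D]
    (τ : D → D)
    (hτadd : ∀ a b, τ (a + b) = τ a + τ b)
    (ε : D)
    (V V' : Type*) [AddCommGroup V] [AddCommGroup V']
    [Module Dᵐᵒᵖ V] [Module Dᵐᵒᵖ V']
    (innV : V → V → D) (innV' : V' → V' → D)
    (hV : IsHermitianForm τ ε innV)
    (hV' : IsHermitianForm τ (-ε) innV')
    (hndV : ∀ v : V, (∀ u : V, innV v u = 0) → v = 0)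
    -- `V = Vb ⊕ Va` with `⟨Vb, Va⟩ = 0`
    (Vb Va : Submodule Dᵐᵒᵖ V)
    (hcompl : IsCompl Vb Va)
    (horth : ∀ v ∈ Vb, ∀ u ∈ Va, innV v u = 0)
    (w : V →ₗ[Dᵐᵒᵖ] V') (wstar : V' →ₗ[Dᵐᵒᵖ] V)
    (hadj : ∀ (v : V) (v' : V'), innV' (w v) v' = innV v (wstar v'))
    -- `wstar ∘ w` maps `Vb` into `Vb` and restricts to a bijection of `Vb`
    (hbij : Set.BijOn (⇑(wstar ∘ₗ w)) (Vb : Set V) (Vb : Set V)) :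
    -- (i) `w` is injective on `Vb`
    Set.InjOn (⇑w) (Vb : Set V) ∧
    -- (ii) the form `innV'` restricted to `V'b := w(Vb)` is nondegenerate …
    (∀ v' ∈ Submodule.map w Vb,
        (∀ u ∈ Submodule.map w Vb, innV' v' u = 0) → v' = 0) ∧
    -- … and `V' = V'b ⊕ V'a` with `V'a` the orthogonal complement of `V'b`
    (∀ x : V', ∃! p : V' × V',
        p.1 ∈ Submodule.map w Vb ∧
        (∀ u ∈ Submodule.map w Vb, innV' p.2 u = 0) ∧
        x = p.1 + p.2) ∧
    -- (iii) `w(Va) ⊆ V'a`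
    (∀ v ∈ Va, ∀ u ∈ Submodule.map w Vb, innV' (w v) u = 0) := by
  have hτ : τ 0 = 0 := by simpa using hτadd 0 0
  have hnd' :=
    nondegenerate_map_of_surjOn_adjoint_comp hV hndV hcompl.codisjoint horth hadj hbij.surjOn
  exact ⟨Set.InjOn.of_comp (g := wstar) hbij.injOn, hnd',
    hV'.existsUnique_add_of_nondegenerate hnd'
      (exists_map_sub_orthogonal_of_surjOn_adjoint_comp hV' hτ hcompl.codisjoint horth hadj
        hbij.surjOn),
    map_orthogonal_map_of_mapsTo_adjoint_comp hV hτ horth hadj hbij.mapsTo⟩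

theorem stmt8
    (D : Type*) [DivisionRing D]
    (τ : D → D)
    (hτadd : ∀ a b, τ (a + b) = τ a + τ b)
    (hτmul : ∀ a b, τ (a * b) = τ b * τ a)
    (hτinv : ∀ a, τ (τ a) = a)
    (ε : D) (hε : ε = 1 ∨ ε = -1)
    (V V' : Type*) [AddCommGroup V] [AddCommGroup V']
    [Module Dᵐᵒᵖ V] [Module Dᵐᵒᵖ V']
    [FiniteDimensional Dᵐᵒᵖ V] [FiniteDimensional Dᵐᵒᵖ V']
    (innV : V → V → D) (innV' : V' → V' → D)
    (hV : IsHermitianForm τ ε innV)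
    (hV' : IsHermitianForm τ (-ε) innV')
    (hndV : ∀ v : V, (∀ u : V, innV v u = 0) → v = 0)
    (hndV' : ∀ v' : V', (∀ u' : V', innV' v' u' = 0) → v' = 0)
    -- `V = Vb ⊕ Va` with `⟨Vb, Va⟩ = 0`
    (Vb Va : Submodule Dᵐᵒᵖ V)
    (hcompl : IsCompl Vb Va)
    (horth : ∀ v ∈ Vb, ∀ u ∈ Va, innV v u = 0)
    (w : V →ₗ[Dᵐᵒᵖ] V') (wstar : V' →ₗ[Dᵐᵒᵖ] V)
    (hadj : ∀ (v : V) (v' : V'), innV' (w v) v' = innV v (wstar v'))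
    -- `wstar ∘ w` maps `Vb` into `Vb` and restricts to a bijection of `Vb`
    (hbij : Set.BijOn (⇑(wstar ∘ₗ w)) (Vb : Set V) (Vb : Set V)) :
    -- (i) `w` is injective on `Vb`
    Set.InjOn (⇑w) (Vb : Set V) ∧
    -- (ii) the form `innV'` restricted to `V'b := w(Vb)` is nondegenerate …
    (∀ v' ∈ Submodule.map w Vb,
        (∀ u ∈ Submodule.map w Vb, innV' v' u = 0) → v' = 0) ∧
    -- … and `V' = V'b ⊕ V'a` with `V'a` the orthogonal complement of `V'b`
    (∀ x : V', ∃! p : V' × V',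
        p.1 ∈ Submodule.map w Vb ∧
        (∀ u ∈ Submodule.map w Vb, innV' p.2 u = 0) ∧
        x = p.1 + p.2) ∧
    -- (iii) `w(Va) ⊆ V'a`
    (∀ v ∈ Va, ∀ u ∈ Submodule.map w Vb, innV' (w v) u = 0) :=
  stmt8_general D τ hτadd ε V V' innV innV' hV hV' hndV Vb Va hcompl horth w wstar hadj hbij
end

section
/- Let w : V → V' be a D-linear map admitting an adjoint w^⋆. If T ∈ End_D(V') admits an adjoint T^* with respect to ⟨·,·⟩_{V'}, then ⟨(w^⋆∘T∘w) v₁, v₂⟩_V = −⟨v₁, (w^⋆∘T^*∘w) v₂⟩_V for all v₁, v₂ ∈ V; that is, −w^⋆∘T^*∘w is an adjoint of w^⋆∘T∘w with respect to ⟨·,·⟩_V. In particular, if T is self-adjoint then w^⋆∘T∘w is skew-adjoint, and if T is skew-adjoint then w^⋆∘T∘w is self-adjoint. -/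
/-!
The symmetries of the two forms and the adjunction of `w` and `w^⋆` give
`⟨w^⋆ x, v⟩_V = ε · ⟨x, w v⟩_{V'} · τ(−ε) = −⟨x, w v⟩_{V'}`: the opposite signs of the two
forms leave a factor `−1`. Moving `T` across `⟨·,·⟩_{V'}` and then `w` back gives the claims.
-/

section Involution

variable {D : Type*} [DivisionRing D] {τ : D → D}

theorem involution_map_one (hτmul : ∀ a b, τ (a * b) = τ b * τ a)
    (hτinv : ∀ a, τ (τ a) = a) : τ 1 = 1 := by
  simpa [hτinv] using (hτmul (τ 1) 1).symm

theorem involution_map_neg_of_eq_one_or_eq_neg_one (hτadd : ∀ a b, τ (a + b) = τ a + τ b)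
    (hτmul : ∀ a b, τ (a * b) = τ b * τ a) (hτinv : ∀ a, τ (τ a) = a)
    {ε : D} (hε : ε = 1 ∨ ε = -1) : τ (-ε) = -ε := by
  have hτneg (a : D) : τ (-a) = -τ a := (AddMonoidHom.mk' τ hτadd).map_neg a
  rcases hε with rfl | rfl <;> simp [hτneg, involution_map_one hτmul hτinv]

end Involution

theorem inner_adjoint_apply_left_eq_neg {D : Type*} [DivisionRing D] {τ : D → D}
    (hτmul : ∀ a b, τ (a * b) = τ b * τ a) (hτinv : ∀ a, τ (τ a) = a)
    {ε : D} (hε : ε = 1 ∨ ε = -1) (hτε : τ (-ε) = -ε)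
    {V V' : Type*} {innV : V → V → D} {innV' : V' → V' → D}
    (hV : ∀ v u, innV u v = ε * τ (innV v u))
    (hV' : ∀ v u, innV' u v = -ε * τ (innV' v u))
    {w : V → V'} {wstar : V' → V} (hadj : ∀ v v', innV' (w v) v' = innV v (wstar v'))
    (x : V') (v : V) :
    innV (wstar x) v = -innV' x (w v) := by
  calc innV (wstar x) v
      = ε * τ (innV' (w v) x) := by rw [hV, hadj]
    _ = ε * (innV' x (w v) * -ε) := by rw [hV', hτmul, hτinv, hτε]
    _ = -innV' x (w v) := by rcases hε with rfl | rfl <;> simp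

theorem stmt9
    (D : Type*) [DivisionRing D]
    (τ : D → D)
    (hτadd : ∀ a b, τ (a + b) = τ a + τ b)
    (hτmul : ∀ a b, τ (a * b) = τ b * τ a)
    (hτinv : ∀ a, τ (τ a) = a)
    (ε : D) (hε : ε = 1 ∨ ε = -1)
    (V V' : Type*) [AddCommGroup V] [AddCommGroup V']
    [Module Dᵐᵒᵖ V] [Module Dᵐᵒᵖ V']
    (innV : V → V → D) (innV' : V' → V' → D)
    (hV : IsHermitianForm τ ε innV)
    (hV' : IsHermitianForm τ (-ε) innV')
    (w : V →ₗ[Dᵐᵒᵖ] V') (wstar : V' →ₗ[Dᵐᵒᵖ] V)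
    (hadj : ∀ (v : V) (v' : V'), innV' (w v) v' = innV v (wstar v'))
    (T Tstar : V' →ₗ[Dᵐᵒᵖ] V')
    (hT : ∀ (u u' : V'), innV' (T u) u' = innV' u (Tstar u')) :
    -- `−wstar∘Tstar∘w` is an adjoint of `wstar∘T∘w`
    (∀ (v₁ v₂ : V),
        innV ((wstar ∘ₗ T ∘ₗ w) v₁) v₂ = - innV v₁ ((wstar ∘ₗ Tstar ∘ₗ w) v₂)) ∧
    -- if `T` is self-adjoint then `wstar∘T∘w` is skew-adjoint
    ((∀ (u u' : V'), innV' (T u) u' = innV' u (T u')) →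
      ∀ (v₁ v₂ : V),
        innV ((wstar ∘ₗ T ∘ₗ w) v₁) v₂ = - innV v₁ ((wstar ∘ₗ T ∘ₗ w) v₂)) ∧
    -- if `T` is skew-adjoint then `wstar∘T∘w` is self-adjoint
    ((∀ (u u' : V'), innV' (T u) u' = - innV' u (T u')) →
      ∀ (v₁ v₂ : V),
        innV ((wstar ∘ₗ T ∘ₗ w) v₁) v₂ = innV v₁ ((wstar ∘ₗ T ∘ₗ w) v₂)) := by
  have swap := inner_adjoint_apply_left_eq_neg hτmul hτinv hε
    (involution_map_neg_of_eq_one_or_eq_neg_one hτadd hτmul hτinv hε)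
    hV.2.2.2.2 hV'.2.2.2.2 hadj
  simp only [LinearMap.comp_apply]
  refine ⟨fun v₁ v₂ => ?_, fun hsym v₁ v₂ => ?_, fun hskew v₁ v₂ => ?_⟩
  · rw [swap, hT, hadj]
  · rw [swap, hsym, hadj]
  · rw [swap, hskew, neg_neg, hadj]
end

section
/- Let F be a field, V a finite-dimensional F-vector space, and Γ ∈ End_F(V) an endomorphism whose minimal polynomial is squarefree. Then an endomorphism S ∈ End_F(V) commutes with every endomorphism of V that commutes with Γ if and only if S = p(Γ) for some polynomial p ∈ F[X]. Equivalently, the center of the centralizer of Γ in the F-algebra End_F(V) equals the F-subalgebra generated by Γ. -/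
/-!
Make `V` the `F[X]`-module `AEval' Γ`. Squarefreeness of the minimal polynomial makes it
semisimple, and the endomorphisms commuting with `Γ` are its `F[X]`-linear ones, so the claim
says that the bicommutant of a finitely generated semisimple module `M` over a PID `R` consists of
scalars. Some `x : M` has annihilator `Ann M` (structure theorem), so for every `y` the map
`r • x ↦ r • y` is well defined on the summand `R ∙ x`; extended by zero on a complement it is a
`T ∈ End_R M` with `T x = y`. Hence `M` is cyclic over `End_R M`, and Jacobson density gives the
scalar.
-/

open Module Polynomial LinearMap Submodule

theorem Commute.aeval_right {R A : Type*} [CommSemiring R] [Semiring A] [Algebra R A] {a b : A}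
    (h : Commute a b) (p : R[X]) : Commute a (aeval b p) := by
  induction p using Polynomial.induction_on' with
  | add p q hp hq => simpa using hp.add_right hq
  | monomial n c =>
    simpa [aeval_monomial] using (Algebra.commute_algebraMap_right c a).mul_right (h.pow_right n)

namespace IsSemisimpleModule

section Ring

variable {R M : Type*} [Ring R] [AddCommGroup M] [Module R M] [IsSemisimpleModule R M]

theorem exists_end_apply_eq_of_ker_toSpanSingleton_le {x y : M}
    (h : ker (toSpanSingleton R M x) ≤ ker (toSpanSingleton R M y)) :
    ∃ T : Module.End R M, T x = y := by
  obtain ⟨T, hT⟩ := extension_property _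
    (ker_eq_bot.mp (ker_liftQ_eq_bot' _ _ rfl)) ((ker (toSpanSingleton R M x)).liftQ _ h)
  exact ⟨T, by simpa using congr($hT (Submodule.Quotient.mk 1))⟩

end Ring

variable {R M : Type*} [CommRing R] [AddCommGroup M] [Module R M] [IsSemisimpleModule R M]

theorem span_singleton_eq_top_of_ker_toSpanSingleton_eq_annihilator {x : M}
    (hx : ker (toSpanSingleton R M x) = annihilator R M) : span (Module.End R M) {x} = ⊤ := by
  refine eq_top_iff.mpr fun y _ => mem_span_singleton.mpr ?_
  refine exists_end_apply_eq_of_ker_toSpanSingleton_le (hx ▸ fun r hr => ?_)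
  simpa using Module.mem_annihilator.mp hr y

variable [IsDomain R] [IsPrincipalIdealRing R] [Module.Finite R M]

theorem finite_moduleEnd : Module.Finite (Module.End R M) M :=
  have ⟨x, hx⟩ := exists_ker_toSpanSingleton_eq_annihilator R M
  ⟨⟨{x}, by simpa using span_singleton_eq_top_of_ker_toSpanSingleton_eq_annihilator hx⟩⟩

theorem toModuleEnd_moduleEnd_surjective :
    Function.Surjective (Module.toModuleEnd (Module.End R M) (S := R) M) :=
  have := finite_moduleEnd (R := R) (M := M)
  Module.Finite.toModuleEnd_moduleEnd_surjective

end IsSemisimpleModule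

namespace Module.AEval'

variable {R M : Type*} [CommRing R] [AddCommGroup M] [Module R M] (Γ : Module.End R M)

theorem commute_conj_restrictScalars (T : Module.End R[X] (AEval' Γ)) :
    Commute ((AEval'.of Γ).symm.conj (T.restrictScalars R)) Γ := by
  ext m
  simp [LinearEquiv.conj_apply, ← AEval'.X_smul_of]

/-- `S` transported to `AEval' Γ`; it is linear over `End R[X] (AEval' Γ)` because those
endomorphisms are, up to `AEval'.of`, exactly the endomorphisms of `M` commuting with `Γ`. -/
def bicommutantEnd (S : Module.End R M) (hS : ∀ T : Module.End R M, Commute T Γ → Commute S T) :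
    Module.End (Module.End R[X] (AEval' Γ)) (AEval' Γ) where
  toFun m := AEval'.of Γ (S ((AEval'.of Γ).symm m))
  map_add' := by simp
  map_smul' T m := by
    have := congr($(hS _ (commute_conj_restrictScalars Γ T)) ((AEval'.of Γ).symm m))
    simpa [LinearEquiv.conj_apply] using congr(AEval'.of Γ $this)

end Module.AEval'

theorem Module.End.exists_eq_aeval_of_forall_commute {K V : Type*} [Field K] [AddCommGroup V]
    [Module K V] [FiniteDimensional K V] {Γ : Module.End K V} (hΓ : Γ.IsSemisimple)
    {S : Module.End K V} (hS : ∀ T : Module.End K V, Commute T Γ → Commute S T) :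
    ∃ p : K[X], S = aeval Γ p := by
  have : IsSemisimpleModule K[X] (AEval' Γ) := hΓ
  obtain ⟨p, hp⟩ := IsSemisimpleModule.toModuleEnd_moduleEnd_surjective
    (AEval'.bicommutantEnd Γ S hS)
  refine ⟨p, LinearMap.ext fun v => ?_⟩
  simpa [AEval'.bicommutantEnd] using congr((AEval'.of Γ).symm ($hp (AEval'.of Γ v))).symm

theorem stmt14
    (F : Type*) [Field F]
    (V : Type*) [AddCommGroup V] [Module F V] [FiniteDimensional F V]
    (Γ : Module.End F V) (hsf : Squarefree (minpoly F Γ)) :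
    ∀ S : Module.End F V,
      (∀ T : Module.End F V, T * Γ = Γ * T → S * T = T * S) ↔
        ∃ p : Polynomial F, S = Polynomial.aeval Γ p := by
  intro S
  constructor
  · exact Module.End.exists_eq_aeval_of_forall_commute
      (Module.End.isSemisimple_of_squarefree_aeval_eq_zero hsf (minpoly.aeval F Γ))
  · rintro ⟨p, rfl⟩ T hT
    exact (Commute.aeval_right hT p).symm
end

section
/- Let H be a finite group, J a normal subgroup of H, and J₁ a subgroup with J ≤ J₁ ≤ H. Let τ be a finite-dimensional complex representation of J₁ and χ a finite-dimensional irreducible complex representation of J. Assume that H stabilizes χ, i.e. for every h ∈ H the representation j ↦ χ(h j h⁻¹) of J is isomorphic to χ. Realize the induced representation Ind_{J₁}^H τ on the space {f : H → τ : f(j₁ h) = τ(j₁) f(h) for all j₁ ∈ J₁, h ∈ H}, with H acting by right translation. Then the χ-isotypic component τ[χ] of τ|_J is a J₁-subrepresentation of τ, and the χ-isotypic component of (Ind_{J₁}^H τ)|_J equals {f ∈ Ind_{J₁}^H τ : f(h) ∈ τ[χ] for all h ∈ H}, which is the induced representation Ind_{J₁}^H (τ[χ]). -/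
/-!
For `h ∈ H` let `φ_h` be an isomorphism of `χ` with its `h`-conjugate. Composing a `J`-map out
of `χ` with a translation (`τ j₁`, evaluation at `h`, or extension from the coset `J₁ h`) and with
`φ_h` gives again a `J`-map out of `χ`, which by irreducibility is injective or zero, so its image
lies in the isotypic component. This yields the `J₁`-stability of `τ[χ]` and one inclusion.
For the other, every `f ∈ Ind τ` is `|J₁|⁻¹ ∑_h indExtend τ h (f h)`, where `indExtend τ h v` is
the element of `Ind τ` supported on `J₁ h` with value `v` at `h`.
-/

open Function Submodule

section Isotypic

variable {k G V W : Type*} [CommRing k] [Group G] [AddCommGroup V] [Module k V]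
  [AddCommGroup W] [Module k W]

def isotypicSet (ρ : G → V →ₗ[k] V) (χ : Representation k G W) : Set V :=
  {y | ∃ e : W →ₗ[k] V, Injective e ∧ (∀ (g : G) (z : W), e (χ g z) = ρ g (e z)) ∧
    y ∈ Set.range e}

def HasOnlyTrivialInvariantSubmodules (χ : Representation k G W) : Prop :=
  ∀ U : Submodule k W, (∀ (g : G) (x : W), x ∈ U → χ g x ∈ U) → U = ⊥ ∨ U = ⊤

variable {χ : Representation k G W} {ρ : G → V →ₗ[k] V} {e : W →ₗ[k] V}

theorem injective_or_eq_zero_of_intertwines (hχ : HasOnlyTrivialInvariantSubmodules χ)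
    (he : ∀ (g : G) (z : W), e (χ g z) = ρ g (e z)) : Injective e ∨ e = 0 := by
  refine (hχ (LinearMap.ker e) fun g x hx => ?_).imp LinearMap.ker_eq_bot.mp
    LinearMap.ker_eq_top.mp
  rw [LinearMap.mem_ker] at hx ⊢
  rw [he, hx, map_zero]

theorem apply_mem_span_of_intertwines (hχ : HasOnlyTrivialInvariantSubmodules χ)
    (he : ∀ (g : G) (z : W), e (χ g z) = ρ g (e z)) {T : Set V}
    (hT : Injective e → Set.range e ⊆ T) (z : W) : e z ∈ span k T := by
  rcases injective_or_eq_zero_of_intertwines hχ he with hinj | rfl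
  · exact subset_span (hT hinj ⟨z, rfl⟩)
  · exact zero_mem _

theorem range_subset_isotypicSet (he : ∀ (g : G) (z : W), e (χ g z) = ρ g (e z))
    (hinj : Injective e) : Set.range e ⊆ isotypicSet ρ χ := by
  rintro _ ⟨z, rfl⟩
  exact ⟨e, hinj, he, z, rfl⟩

end Isotypic

section Induced

variable {k H V : Type*} [CommRing k] [Group H] [AddCommGroup V] [Module k V]
  {J₁ : Subgroup H}

def ind (τ : Representation k J₁ V) : Submodule k (H → V) where
  carrier := {f | ∀ (j₁ : J₁) (h : H), f (↑j₁ * h) = τ j₁ (f h)}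
  add_mem' hf hg j₁ h := by simp only [Pi.add_apply, hf j₁ h, hg j₁ h, map_add]
  zero_mem' j₁ h := by simp only [Pi.zero_apply, map_zero]
  smul_mem' c f hf j₁ h := by simp only [Pi.smul_apply, hf j₁ h, map_smul]

open Classical in
noncomputable def indExtend (τ : Representation k J₁ V) (h : H) : V →ₗ[k] (H → V) where
  toFun v g := if hg : g * h⁻¹ ∈ J₁ then τ ⟨g * h⁻¹, hg⟩ v else 0
  map_add' v w := by ext g; by_cases hg : g * h⁻¹ ∈ J₁ <;> simp [hg]
  map_smul' c v := by ext g; by_cases hg : g * h⁻¹ ∈ J₁ <;> simp [hg]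

variable (τ : Representation k J₁ V)

theorem indExtend_apply (h g : H) (v : V) (hg : g * h⁻¹ ∈ J₁) :
    indExtend τ h v g = τ ⟨g * h⁻¹, hg⟩ v :=
  dif_pos hg

theorem indExtend_apply_of_notMem (h g : H) (v : V) (hg : g * h⁻¹ ∉ J₁) :
    indExtend τ h v g = 0 :=
  dif_neg hg

theorem indExtend_mem_ind (h : H) (v : V) : indExtend τ h v ∈ ind τ := by
  intro j₁ g
  by_cases hg : g * h⁻¹ ∈ J₁
  · have hjg : ↑j₁ * g * h⁻¹ ∈ J₁ := by rw [mul_assoc]; exact mul_mem j₁.2 hg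
    rw [indExtend_apply τ h _ v hjg, indExtend_apply τ h g v hg,
      ← Module.End.mul_apply, ← map_mul]
    congr 2
    ext
    simp [mul_assoc]
  · have hjg : ↑j₁ * g * h⁻¹ ∉ J₁ := fun hjg => hg (by
      simpa [mul_assoc] using mul_mem (inv_mem j₁.2) hjg)
    rw [indExtend_apply_of_notMem τ h _ v hjg,
      indExtend_apply_of_notMem τ h g v hg, map_zero]

theorem indExtend_conj (h x : H) (hx : h * x * h⁻¹ ∈ J₁) (v : V) :
    indExtend τ h (τ ⟨h * x * h⁻¹, hx⟩ v) = fun g => indExtend τ h v (g * x) := by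
  ext g
  have hiff : g * x * h⁻¹ ∈ J₁ ↔ g * h⁻¹ ∈ J₁ := by
    rw [show g * x * h⁻¹ = g * h⁻¹ * (h * x * h⁻¹) by group]
    exact mul_mem_cancel_right hx
  by_cases hg : g * h⁻¹ ∈ J₁
  · rw [indExtend_apply τ h g _ hg, indExtend_apply τ h _ v (hiff.2 hg),
      ← Module.End.mul_apply, ← map_mul]
    congr 2
    ext
    simp only [Subgroup.coe_mul]
    group
  · rw [indExtend_apply_of_notMem τ h g _ hg,
      indExtend_apply_of_notMem τ h _ v (mt hiff.1 hg)]

theorem sum_indExtend [Fintype H] {f : H → V} (hf : f ∈ ind τ) :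
    ∑ h, indExtend τ h (f h) = Nat.card J₁ • f := by
  classical
  ext g
  have hterm (h : H) : indExtend τ h (f h) g = if g * h⁻¹ ∈ J₁ then f g else 0 := by
    split_ifs with hg
    · rw [indExtend_apply τ h g _ hg, ← hf ⟨_, hg⟩ h, inv_mul_cancel_right]
    · exact indExtend_apply_of_notMem τ h g _ hg
  have hcard : (Finset.univ.filter fun h => g * h⁻¹ ∈ J₁).card = Nat.card J₁ := by
    rw [← Fintype.card_subtype, Nat.card_eq_fintype_card]
    exact Fintype.card_congr
      { toFun h := ⟨g * h.1⁻¹, h.2⟩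
        invFun j₁ := ⟨(↑j₁)⁻¹ * g, by simp⟩
        left_inv h := by ext; simp
        right_inv j₁ := by ext; simp }
  simp only [Finset.sum_apply, hterm, Finset.sum_ite, Finset.sum_const_zero, add_zero,
    Finset.sum_const, hcard, Pi.smul_apply]

end Induced

section CliffordInduction

variable {k H V W : Type*} [CommRing k] [Group H] [AddCommGroup V] [Module k V]
  [AddCommGroup W] [Module k W] {J J₁ : Subgroup H} (hJn : J.Normal) (hle : J ≤ J₁)
  (τ : Representation k J₁ V) (χ : Representation k J W)

def IsStabilizedBy (h : H) : Prop :=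
  ∃ φ : W ≃ₗ[k] W, ∀ (j : J) (x : W),
    φ (χ j x) = χ ⟨h * ↑j * h⁻¹, hJn.conj_mem ↑j j.2 h⟩ (φ x)

def isotypicSpan : Submodule k V :=
  span k (isotypicSet (fun j : J => τ ⟨j, hle j.2⟩) χ)

def indIsotypicSet : Set (H → V) :=
  {f | ∃ e : W →ₗ[k] (H → V), Injective e ∧
    (∀ (z : W) (j₁ : J₁) (h : H), e z (↑j₁ * h) = τ j₁ (e z h)) ∧
    (∀ (j : J) (z : W), e (χ j z) = fun h => e z (h * ↑j)) ∧ f ∈ Set.range e}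

variable {τ χ}

theorem rep_apply_mem_isotypicSpan (hχ : HasOnlyTrivialInvariantSubmodules χ)
    (hstab : ∀ j₁ : J₁, IsStabilizedBy hJn χ j₁) (j₁ : J₁) {x : V}
    (hx : x ∈ isotypicSpan hle τ χ) : τ j₁ x ∈ isotypicSpan hle τ χ := by
  suffices isotypicSpan hle τ χ ≤ (isotypicSpan hle τ χ).comap (τ j₁) from this hx
  refine span_le.2 fun y hy => ?_
  obtain ⟨e, -, he, z, rfl⟩ := hy
  obtain ⟨φ, hφ⟩ := hstab j₁⁻¹
  have he' (j : J) (z : W) : (τ j₁ ∘ₗ e ∘ₗ φ.toLinearMap) (χ j z) =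
      τ ⟨j, hle j.2⟩ ((τ j₁ ∘ₗ e ∘ₗ φ.toLinearMap) z) := by
    change τ j₁ (e (φ (χ j z))) = τ ⟨j, hle j.2⟩ (τ j₁ (e (φ z)))
    rw [hφ, he, ← Module.End.mul_apply, ← map_mul, ← Module.End.mul_apply, ← map_mul]
    congr 2
    ext
    simp only [Subgroup.coe_mul, InvMemClass.coe_inv]
    group
  simpa [isotypicSpan] using
    apply_mem_span_of_intertwines hχ he' (range_subset_isotypicSet he') (φ.symm z)

theorem span_indIsotypicSet_le_ind : span k (indIsotypicSet τ χ) ≤ ind τ :=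
  span_le.2 fun _ ⟨_, _, hind, _, z, hz⟩ => hz ▸ hind z

theorem apply_mem_isotypicSpan (hχ : HasOnlyTrivialInvariantSubmodules χ)
    (hstab : ∀ h : H, IsStabilizedBy hJn χ h) {f : H → V}
    (hf : f ∈ span k (indIsotypicSet τ χ)) (h : H) : f h ∈ isotypicSpan hle τ χ := by
  suffices span k (indIsotypicSet τ χ) ≤ (isotypicSpan hle τ χ).comap (LinearMap.proj h) from
    this hf
  refine span_le.2 fun f hf => ?_
  obtain ⟨e, -, hind, he, z, rfl⟩ := hf
  obtain ⟨φ, hφ⟩ := hstab h⁻¹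
  have he' (j : J) (z : W) : (LinearMap.proj h ∘ₗ e ∘ₗ φ.toLinearMap) (χ j z) =
      τ ⟨j, hle j.2⟩ ((LinearMap.proj h ∘ₗ e ∘ₗ φ.toLinearMap) z) := by
    simp only [LinearMap.comp_apply, LinearEquiv.coe_coe, LinearMap.coe_proj,
      Function.eval, hφ, he]
    rw [← hind]
    group
  simpa [isotypicSpan] using
    apply_mem_span_of_intertwines hχ he' (range_subset_isotypicSet he') (φ.symm z)

theorem indExtend_mem_span_indIsotypicSet (hχ : HasOnlyTrivialInvariantSubmodules χ) {h : H}
    (hstab : IsStabilizedBy hJn χ h) {v : V} (hv : v ∈ isotypicSpan hle τ χ) :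
    indExtend τ h v ∈ span k (indIsotypicSet τ χ) := by
  suffices isotypicSpan hle τ χ ≤ (span k (indIsotypicSet τ χ)).comap (indExtend τ h) from
    this hv
  refine span_le.2 fun v hv => ?_
  obtain ⟨e, -, he, z, rfl⟩ := hv
  obtain ⟨φ, hφ⟩ := hstab
  set e' := indExtend τ h ∘ₗ e ∘ₗ φ.toLinearMap
  have he' (j : J) (z : W) : e' (χ j z) = fun g => e' z (g * j) := by
    simp only [e', LinearMap.comp_apply, LinearEquiv.coe_coe, hφ, he]
    exact indExtend_conj τ h j _ _
  have hmem := apply_mem_span_of_intertwines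
    (ρ := fun j : J => LinearMap.funLeft k V (· * (j : H))) (T := indIsotypicSet τ χ)
    hχ he' (fun hinj => ?_) (φ.symm z)
  · simpa [e'] using hmem
  · rintro _ ⟨z, rfl⟩
    exact ⟨e', hinj, fun z => indExtend_mem_ind τ h _, he', z, rfl⟩

theorem mem_span_indIsotypicSet [Fintype H] (hcard : IsUnit (Nat.card J₁ : k))
    (hχ : HasOnlyTrivialInvariantSubmodules χ) (hstab : ∀ h : H, IsStabilizedBy hJn χ h)
    {f : H → V} (hf : f ∈ ind τ) (hval : ∀ h, f h ∈ isotypicSpan hle τ χ) :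
    f ∈ span k (indIsotypicSet τ χ) := by
  rw [← smul_mem_iff_of_isUnit _ hcard, Nat.cast_smul_eq_nsmul, ← sum_indExtend τ hf]
  exact sum_mem fun h _ => indExtend_mem_span_indIsotypicSet hJn hle hχ (hstab h) (hval h)

end CliffordInduction

theorem stmt15_general
    (H : Type*) [Group H] [Fintype H]
    (J J₁ : Subgroup H) (hJn : J.Normal) (hle : J ≤ J₁)
    (Wτ : Type*) [AddCommGroup Wτ] [Module ℂ Wτ]
    (Wχ : Type*) [AddCommGroup Wχ] [Module ℂ Wχ]
    (τ : Representation ℂ J₁ Wτ) (χ : Representation ℂ J Wχ)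
    -- `χ` is irreducible
    (hχ_irr : ∀ U : Submodule ℂ Wχ,
      (∀ (j : J) (x : Wχ), x ∈ U → χ j x ∈ U) → U = ⊥ ∨ U = ⊤)
    -- `H` stabilizes `χ`: for every `h ∈ H`, `j ↦ χ(h j h⁻¹)` is isomorphic to `χ`
    (hstab : ∀ h : H, ∃ φ : Wχ ≃ₗ[ℂ] Wχ,
      ∀ (j : J) (x : Wχ),
        φ (χ j x) = χ ⟨h * ↑j * h⁻¹, hJn.conj_mem ↑j j.2 h⟩ (φ x)) :
    -- (1) the `χ`-isotypic component `τ[χ]` of `τ|_J` (the span of the images of all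
    --     injective `J`-equivariant maps `Wχ → Wτ`) is a `J₁`-subrepresentation of `τ`
    (∀ (j₁ : J₁) (x : Wτ),
      x ∈ Submodule.span ℂ {y : Wτ | ∃ e : Wχ →ₗ[ℂ] Wτ, Function.Injective e ∧
            (∀ (j : J) (z : Wχ), e (χ j z) = τ ⟨↑j, hle j.2⟩ (e z)) ∧ y ∈ Set.range e} →
      τ j₁ x ∈ Submodule.span ℂ {y : Wτ | ∃ e : Wχ →ₗ[ℂ] Wτ, Function.Injective e ∧
            (∀ (j : J) (z : Wχ), e (χ j z) = τ ⟨↑j, hle j.2⟩ (e z)) ∧ y ∈ Set.range e}) ∧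
    -- (2) in the induced representation `Ind_{J₁}^H τ`, realized on the space of functions
    --     `f : H → Wτ` with `f (j₁ * h) = τ j₁ (f h)` and `H` acting by right translation,
    --     the `χ`-isotypic component of the restriction to `J` equals
    --     `{f ∈ Ind : f(h) ∈ τ[χ] for all h}`, i.e. `Ind_{J₁}^H (τ[χ])`
    ((Submodule.span ℂ {f : H → Wτ | ∃ e : Wχ →ₗ[ℂ] (H → Wτ), Function.Injective e ∧
          (∀ (z : Wχ) (j₁ : J₁) (h : H), e z (↑j₁ * h) = τ j₁ (e z h)) ∧
          (∀ (j : J) (z : Wχ), e (χ j z) = fun h => e z (h * ↑j)) ∧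
          f ∈ Set.range e} : Set (H → Wτ))
      = {f : H → Wτ | (∀ (j₁ : J₁) (h : H), f (↑j₁ * h) = τ j₁ (f h)) ∧
          ∀ h : H, f h ∈ Submodule.span ℂ
            {y : Wτ | ∃ e : Wχ →ₗ[ℂ] Wτ, Function.Injective e ∧
              (∀ (j : J) (z : Wχ), e (χ j z) = τ ⟨↑j, hle j.2⟩ (e z)) ∧
              y ∈ Set.range e}}) := by
  have hcard : IsUnit (Nat.card J₁ : ℂ) := (Nat.cast_ne_zero.2 Nat.card_pos.ne').isUnit
  refine ⟨fun j₁ _ hx => rep_apply_mem_isotypicSpan hJn hle hχ_irr (fun j₁ => hstab j₁) j₁ hx, ?_⟩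
  ext f
  exact ⟨fun hf => ⟨span_indIsotypicSet_le_ind hf,
      apply_mem_isotypicSpan hJn hle hχ_irr hstab hf⟩,
    fun ⟨hind, hval⟩ => mem_span_indIsotypicSet hJn hle hcard hχ_irr hstab hind hval⟩

theorem stmt15
    (H : Type*) [Group H] [Fintype H]
    (J J₁ : Subgroup H) (hJn : J.Normal) (hle : J ≤ J₁)
    (Wτ : Type*) [AddCommGroup Wτ] [Module ℂ Wτ] [FiniteDimensional ℂ Wτ]
    (Wχ : Type*) [AddCommGroup Wχ] [Module ℂ Wχ] [FiniteDimensional ℂ Wχ]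
    (τ : Representation ℂ J₁ Wτ) (χ : Representation ℂ J Wχ)
    -- `χ` is irreducible
    (hχ_ne : Nontrivial Wχ)
    (hχ_irr : ∀ U : Submodule ℂ Wχ,
      (∀ (j : J) (x : Wχ), x ∈ U → χ j x ∈ U) → U = ⊥ ∨ U = ⊤)
    -- `H` stabilizes `χ`: for every `h ∈ H`, `j ↦ χ(h j h⁻¹)` is isomorphic to `χ`
    (hstab : ∀ h : H, ∃ φ : Wχ ≃ₗ[ℂ] Wχ,
      ∀ (j : J) (x : Wχ),
        φ (χ j x) = χ ⟨h * ↑j * h⁻¹, hJn.conj_mem ↑j j.2 h⟩ (φ x)) :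
    -- (1) the `χ`-isotypic component `τ[χ]` of `τ|_J` (the span of the images of all
    --     injective `J`-equivariant maps `Wχ → Wτ`) is a `J₁`-subrepresentation of `τ`
    (∀ (j₁ : J₁) (x : Wτ),
      x ∈ Submodule.span ℂ {y : Wτ | ∃ e : Wχ →ₗ[ℂ] Wτ, Function.Injective e ∧
            (∀ (j : J) (z : Wχ), e (χ j z) = τ ⟨↑j, hle j.2⟩ (e z)) ∧ y ∈ Set.range e} →
      τ j₁ x ∈ Submodule.span ℂ {y : Wτ | ∃ e : Wχ →ₗ[ℂ] Wτ, Function.Injective e ∧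
            (∀ (j : J) (z : Wχ), e (χ j z) = τ ⟨↑j, hle j.2⟩ (e z)) ∧ y ∈ Set.range e}) ∧
    -- (2) in the induced representation `Ind_{J₁}^H τ`, realized on the space of functions
    --     `f : H → Wτ` with `f (j₁ * h) = τ j₁ (f h)` and `H` acting by right translation,
    --     the `χ`-isotypic component of the restriction to `J` equals
    --     `{f ∈ Ind : f(h) ∈ τ[χ] for all h}`, i.e. `Ind_{J₁}^H (τ[χ])`
    ((Submodule.span ℂ {f : H → Wτ | ∃ e : Wχ →ₗ[ℂ] (H → Wτ), Function.Injective e ∧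
          (∀ (z : Wχ) (j₁ : J₁) (h : H), e z (↑j₁ * h) = τ j₁ (e z h)) ∧
          (∀ (j : J) (z : Wχ), e (χ j z) = fun h => e z (h * ↑j)) ∧
          f ∈ Set.range e} : Set (H → Wτ))
      = {f : H → Wτ | (∀ (j₁ : J₁) (h : H), f (↑j₁ * h) = τ j₁ (f h)) ∧
          ∀ h : H, f h ∈ Submodule.span ℂ
            {y : Wτ | ∃ e : Wχ →ₗ[ℂ] Wτ, Function.Injective e ∧
              (∀ (j : J) (z : Wχ), e (χ j z) = τ ⟨↑j, hle j.2⟩ (e z)) ∧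
              y ∈ Set.range e}}) :=
  stmt15_general H J J₁ hJn hle Wτ Wχ τ χ hχ_irr hstab
end
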